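/- Let κ = 0 and c = c₀, define H and g as above with these parameters, and let ρ̂ be the unique solution of ρ = exp(H(ρ)) with ρ̂ > c₀. Then g is strictly increasing on (1, ρ̂) and strictly decreasing on (ρ̂, ∞). -/

import Mathlib

/-- `H(ρ) = (c²/2)·(1 − 1/ρ²) − κ·ln ρ`. -/
noncomputable def Hfun (κ c ρ : ℝ) : ℝ := c ^ 2 / 2 * (1 - 1 / ρ ^ 2) - κ * Real.log ρ

/-- `g(ρ) = c²/ρ + κ·ρ + exp(H(ρ))`. -/
noncomputable def gfun (κ c ρ : ℝ) : ℝ := c ^ 2 / ρ + κ * ρ + Real.exp (Hfun κ c ρ)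

lemma hasDerivAt_H0 (c ρ : ℝ) (hρ : 0 < ρ) :
    HasDerivAt (Hfun 0 c) (c ^ 2 / ρ ^ 3) ρ := by
  have h1 : HasDerivAt (fun x : ℝ => 1 - 1 / x ^ 2) (2 / ρ ^ 3) ρ := by
    have hp : HasDerivAt (fun x : ℝ => x ^ 2) (2 * ρ) ρ := by
      simpa using hasDerivAt_pow 2 ρ
    have hinv := hp.inv (by positivity)
    have := hinv.const_sub 1
    have heq : (fun x : ℝ => 1 - (x ^ 2)⁻¹) = fun x : ℝ => 1 - 1 / x ^ 2 := by
      funext x; rw [one_div]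
    simp only [Pi.inv_apply] at this
    rw [heq] at this
    refine this.congr_deriv ?_
    field_simp
    all_goals ring
  have := (h1.const_mul (c ^ 2 / 2))
  have h2 : HasDerivAt (fun x : ℝ => Hfun 0 c x) (c ^ 2 / 2 * (2 / ρ ^ 3)) ρ := by
    simpa [Hfun] using this
  convert h2 using 1
  field_simp

lemma hasDerivAt_g0 (c ρ : ℝ) (hρ : 0 < ρ) :
    HasDerivAt (gfun 0 c) (c ^ 2 * (Real.exp (Hfun 0 c ρ) - ρ) / ρ ^ 3) ρ := by
  have hzp : ρ ^ (-2:ℤ) = (ρ ^ 2)⁻¹ := by rw [zpow_neg, zpow_two, pow_two]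
  have h1 : HasDerivAt (fun x : ℝ => c ^ 2 / x) (c ^ 2 * (-(ρ ^ (-2:ℤ)))) ρ := by
    have := ((hasDerivAt_inv (ne_of_gt hρ)).const_mul (c ^ 2))
    have heq : (fun x : ℝ => c ^ 2 * x⁻¹) = fun x : ℝ => c ^ 2 / x := by
      funext x; rw [div_eq_mul_inv]
    rw [heq] at this
    rw [hzp]; exact this
  have h2 := ((hasDerivAt_H0 c ρ hρ).exp)
  have := h1.add h2
  have hgeq : gfun 0 c = fun x : ℝ => c ^ 2 / x + Real.exp (Hfun 0 c x) := by
    funext x; simp [gfun]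
  have h3 : HasDerivAt (gfun 0 c)
      (c ^ 2 * (-(ρ ^ (-2:ℤ))) + Real.exp (Hfun 0 c ρ) * (c ^ 2 / ρ ^ 3)) ρ := by
    rw [hgeq]; exact this
  convert h3 using 1
  rw [hzp]
  field_simp
  ring

lemma hasDerivAt_phi (c ρ : ℝ) (hρ : 0 < ρ) :
    HasDerivAt (fun x => Hfun 0 c x - Real.log x) ((c ^ 2 - ρ ^ 2) / ρ ^ 3) ρ := by
  have := (hasDerivAt_H0 c ρ hρ).sub (Real.hasDerivAt_log (ne_of_gt hρ))
  refine this.congr_deriv ?_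
  have hρ0 : ρ ≠ 0 := ne_of_gt hρ
  field_simp
  all_goals ring

/-- For `κ = 0` and `c = c₀` (the unique root `> 1` of `z²+1 = exp(z²/2)`),
if `ρ̂ > c₀` solves `ρ̂ = exp(H(ρ̂))`, then `g` is strictly increasing on `(1, ρ̂)` and
strictly decreasing on `(ρ̂, ∞)`. -/
theorem stmt6 (c ρhat : ℝ)
    (hc : 1 < c ∧ c ^ 2 + 1 = Real.exp (c ^ 2 / 2))
    (hρ1 : c < ρhat) (hρ2 : ρhat = Real.exp (Hfun 0 c ρhat)) :
    StrictMonoOn (gfun 0 c) (Set.Ioo 1 ρhat) ∧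
      StrictAntiOn (gfun 0 c) (Set.Ioi ρhat) := by
  obtain ⟨hc1, _⟩ := hc
  have hc0 : (0:ℝ) < c := lt_trans one_pos hc1
  have hρhat1 : (1:ℝ) < ρhat := lt_trans hc1 hρ1
  have hρhat0 : (0:ℝ) < ρhat := lt_trans one_pos hρhat1
  set φ : ℝ → ℝ := fun x => Hfun 0 c x - Real.log x with hφdef
  -- φ(1) = 0
  have hφ1 : φ 1 = 0 := by simp [hφdef, Hfun]
  -- φ(ρhat) = 0
  have hφρ : φ ρhat = 0 := by
    have : Real.log ρhat = Hfun 0 c ρhat := by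
      conv_lhs => rw [hρ2]
      exact Real.log_exp _
    simp [hφdef, this]
  have hφcont : ∀ x : ℝ, 0 < x → ContinuousAt φ x := fun x hx =>
    (hasDerivAt_phi c x hx).continuousAt
  -- φ strictly mono on [1, c]
  have hmono : StrictMonoOn φ (Set.Icc 1 c) := by
    apply strictMonoOn_of_deriv_pos (convex_Icc 1 c)
      (fun x hx => (hφcont x (lt_of_lt_of_le one_pos hx.1)).continuousWithinAt)
    intro x hx
    rw [interior_Icc] at hx
    have hx0 : 0 < x := lt_trans one_pos hx.1
    rw [(hasDerivAt_phi c x hx0).deriv]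
    have h2 : x ^ 2 < c ^ 2 := by nlinarith [hx.2, hx0]
    have : 0 < c ^ 2 - x ^ 2 := by linarith
    positivity
  -- φ strictly anti on [c, ∞)
  have hanti : StrictAntiOn φ (Set.Ici c) := by
    apply strictAntiOn_of_deriv_neg (convex_Ici c)
      (fun x hx => (hφcont x (lt_of_lt_of_le hc0 hx)).continuousWithinAt)
    intro x hx
    rw [interior_Ici] at hx
    have hx0 : 0 < x := lt_trans hc0 hx
    rw [(hasDerivAt_phi c x hx0).deriv]
    have hcx : c < x := hx
    have h2 : c ^ 2 < x ^ 2 := by nlinarith [mul_pos (sub_pos.2 hcx) (show (0:ℝ) < x + c by linarith)]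
    apply div_neg_of_neg_of_pos (by linarith) (by positivity)
  -- sign of φ
  have hφpos : ∀ x ∈ Set.Ioo (1:ℝ) ρhat, 0 < φ x := by
    intro x hx
    rcases le_or_gt x c with h | h
    · calc 0 = φ 1 := hφ1.symm
        _ < φ x := hmono ⟨le_refl 1, hc1.le⟩ ⟨hx.1.le, h⟩ hx.1
    · calc 0 = φ ρhat := hφρ.symm
        _ < φ x := hanti h.le hρ1.le hx.2
  have hφneg : ∀ x ∈ Set.Ioi ρhat, φ x < 0 := by
    intro x hx
    calc φ x < φ ρhat := hanti hρ1.le (le_trans hρ1.le (le_of_lt hx)) hx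
      _ = 0 := hφρ
  -- sign of exp(H x) - x
  have hkey : ∀ x : ℝ, 0 < x → Real.exp (Hfun 0 c x) - x = x * (Real.exp (φ x) - 1) := by
    intro x hx0
    have : Hfun 0 c x = φ x + Real.log x := by simp [hφdef]
    rw [this, Real.exp_add, Real.exp_log hx0]
    ring
  have hgcont : ∀ x : ℝ, 0 < x → ContinuousAt (gfun 0 c) x :=
    fun x hx => (hasDerivAt_g0 c x hx).continuousAt
  constructor
  · apply strictMonoOn_of_deriv_pos (convex_Ioo 1 ρhat)
      (fun x hx => (hgcont x (lt_trans one_pos hx.1)).continuousWithinAt)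
    intro x hx
    rw [interior_Ioo] at hx
    have hx0 : 0 < x := lt_trans one_pos hx.1
    rw [(hasDerivAt_g0 c x hx0).deriv]
    have h1 : 0 < Real.exp (Hfun 0 c x) - x := by
      rw [hkey x hx0]
      have := hφpos x hx
      have : 1 < Real.exp (φ x) := by
        calc (1:ℝ) = Real.exp 0 := (Real.exp_zero).symm
          _ < Real.exp (φ x) := Real.exp_lt_exp.2 this
      nlinarith
    positivity
  · apply strictAntiOn_of_deriv_neg (convex_Ioi ρhat)
      (fun x hx => (hgcont x (lt_trans hρhat0 hx)).continuousWithinAt)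
    intro x hx
    rw [interior_Ioi] at hx
    have hx0 : 0 < x := lt_trans hρhat0 hx
    rw [(hasDerivAt_g0 c x hx0).deriv]
    have h1 : Real.exp (Hfun 0 c x) - x < 0 := by
      rw [hkey x hx0]
      have hn := hφneg x hx
      have : Real.exp (φ x) < 1 := by
        calc Real.exp (φ x) < Real.exp 0 := Real.exp_lt_exp.2 hn
          _ = 1 := Real.exp_zero
      nlinarith
    apply div_neg_of_neg_of_pos (mul_neg_of_pos_of_neg (by positivity) h1) (by positivity)
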